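/- arXiv:1104.0436 — 2 statements merged into one kernel-verified Lean document; each statement's English description precedes it below -/
import Mathlib

section
/- Let B be a skew-symmetric integer matrix on n vertices such that every vertex has in-degree exactly 2 and out-degree exactly 2 (so the total number of arrows is 2n). Suppose there are m ≥ 1 distinct vertices v₁, …, v_m such that the full subquiver on them is the linear A_m quiver, i.e. B_{v_s v_{s+1}} = 1 for 1 ≤ s < m and B_{v_s v_t} = 0 for all other pairs s < t. Then 3m + 1 ≤ 2n; in particular m ≤ (2n - 1)/3. -/
open Finset Matrix

def mutB {n : ℕ} (B : Matrix (Fin n) (Fin n) ℤ) (k : Fin n) : Matrix (Fin n) (Fin n) ℤ :=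
  fun i j => if i = k ∨ j = k then -B i j
    else B i j + Int.sign (B i k) * max (B i k * B k j) 0

def arrows {n : ℕ} (B : Matrix (Fin n) (Fin n) ℤ) : ℤ :=
  ∑ p ∈ Finset.univ.filter (fun p : Fin n × Fin n => p.1 < p.2), |B p.1 p.2|
theorem path_bound {n m : ℕ} (B : Matrix (Fin n) (Fin n) ℤ) (hB : Bᵀ = -B)
    (hin : ∀ k, ∑ i, max (B i k) 0 = 2)
    (hout : ∀ k, ∑ j, max (B k j) 0 = 2)
    (hm : 1 ≤ m) (v : Fin m → Fin n) (hv : Function.Injective v)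
    (hpath : ∀ s t : Fin m, s < t →
      (((t : ℕ) = s + 1 ∧ B (v s) (v t) = 1) ∨ ((t : ℕ) ≠ s + 1 ∧ B (v s) (v t) = 0))) :
    3 * m + 1 ≤ 2 * n := by
  classical
  set f : Fin n → Fin n → ℤ := fun i j => max (B i j) 0 with hf
  have hskew : ∀ i j, B j i = -B i j := by
    intro i j
    have := congrFun (congrFun hB i) j
    simp [Matrix.transpose_apply] at this
    omega
  have hdiag : ∀ i, B i i = 0 := by
    intro i; have := hskew i i; omega
  obtain ⟨k, rfl⟩ := Nat.exists_eq_succ_of_ne_zero (by omega : m ≠ 0)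
  have hval : ∀ s t : Fin (k+1), f (v s) (v t) = if (t:ℕ) = (s:ℕ)+1 then 1 else 0 := by
    intro s t
    rcases lt_trichotomy s t with h | h | h
    · rcases hpath s t h with ⟨h1, h2⟩ | ⟨h1, h2⟩ <;> simp [hf, h1, h2]
    · subst h
      have : (s:ℕ) ≠ (s:ℕ)+1 := by omega
      simp [hf, hdiag, this]
    · have ht : (t:ℕ) ≠ (s:ℕ)+1 := by
        have := Fin.lt_iff_val_lt_val.mp h; omega
      have he : B (v s) (v t) = -B (v t) (v s) := hskew (v t) (v s)
      rcases hpath t s h with ⟨h1, h2⟩ | ⟨h1, h2⟩ <;> simp [hf, ht, he, h2]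
  have hW : ∑ s, ∑ t, f (v s) (v t) = (k : ℤ) := by
    have h1 : ∀ s : Fin (k+1), ∑ t, f (v s) (v t) = if (s:ℕ)+1 < k+1 then 1 else 0 := by
      intro s
      simp only [hval]
      by_cases h : (s:ℕ)+1 < k+1
      · rw [if_pos h, Finset.sum_eq_single (⟨(s:ℕ)+1, h⟩ : Fin (k+1))]
        · simp
        · intro t _ ht
          rw [if_neg]
          intro hc; exact ht (Fin.ext hc)
        · simp
      · rw [if_neg h]
        apply Finset.sum_eq_zero
        intro t _
        rw [if_neg]
        have := t.isLt; omega
    rw [Finset.sum_congr rfl (fun s _ => h1 s), Fin.sum_univ_castSucc]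
    have h2 : ∀ i : Fin k, (if ((i.castSucc : Fin (k+1)) : ℕ)+1 < k+1 then (1:ℤ) else 0) = 1 := by
      intro i; exact if_pos (by simpa using Nat.succ_lt_succ i.isLt)
    rw [Finset.sum_congr rfl (fun i _ => h2 i)]
    simp
  set S : Finset (Fin n) := Finset.univ.image v with hS
  have himg : ∀ g : Fin n → ℤ, ∑ i ∈ S, g i = ∑ s, g (v s) := by
    intro g
    rw [hS, Finset.sum_image]
    intro a _ b _ h; exact hv h
  have hcard : (S.card : ℤ) = (k:ℤ)+1 := by
    rw [hS, Finset.card_image_of_injective _ hv]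
    simp
  have fnn : ∀ i j, 0 ≤ f i j := fun i j => le_max_right _ _
  have hA : ∑ i ∈ S, ∑ j ∈ S, f i j = (k:ℤ) := by
    rw [himg]
    rw [Finset.sum_congr rfl (fun s _ => himg (fun j => f (v s) j))]
    exact hW
  -- total
  have htot : ∑ i, ∑ j, f i j = 2 * n := by
    rw [Finset.sum_congr rfl (fun i _ => hout i)]
    simp [mul_comm]
  -- row sums over S
  have hrow : ∑ i ∈ S, ∑ j, f i j = 2 * ((k:ℤ)+1) := by
    rw [Finset.sum_congr rfl (fun i _ => hout i)]
    rw [Finset.sum_const, nsmul_eq_mul]; rw [hcard]; ring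
  have hcol : ∑ j ∈ S, ∑ i, f i j = 2 * ((k:ℤ)+1) := by
    rw [Finset.sum_congr rfl (fun j _ => hin j)]
    rw [Finset.sum_const, nsmul_eq_mul]; rw [hcard]; ring
  -- split
  have hsplit1 : ∀ i, ∑ j ∈ S, f i j + ∑ j ∈ Sᶜ, f i j = ∑ j, f i j :=
    fun i => Finset.sum_add_sum_compl S _
  have hP : ∑ i ∈ S, ∑ j ∈ Sᶜ, f i j = (k:ℤ) + 2 := by
    have : ∑ i ∈ S, (∑ j ∈ S, f i j + ∑ j ∈ Sᶜ, f i j) = 2 * ((k:ℤ)+1) := by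
      rw [Finset.sum_congr rfl (fun i _ => hsplit1 i)]; exact hrow
    rw [Finset.sum_add_distrib, hA] at this
    linarith
  have hQ : ∑ i ∈ Sᶜ, ∑ j ∈ S, f i j = (k:ℤ) + 2 := by
    have h1 : ∑ j ∈ S, (∑ i ∈ S, f i j + ∑ i ∈ Sᶜ, f i j) = 2 * ((k:ℤ)+1) := by
      rw [Finset.sum_congr rfl (fun j _ => Finset.sum_add_sum_compl S (fun i => f i j))]
      exact hcol
    rw [Finset.sum_add_distrib] at h1
    rw [Finset.sum_comm] at h1
    have hA' : ∑ j ∈ S, ∑ i ∈ Sᶜ, f i j = 2*((k:ℤ)+1) - (k:ℤ) := by linarith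
    rw [Finset.sum_comm]
    linarith
  have hR : 0 ≤ ∑ i ∈ Sᶜ, ∑ j ∈ Sᶜ, f i j :=
    Finset.sum_nonneg (fun i _ => Finset.sum_nonneg (fun j _ => fnn i j))
  have hdecomp : (k:ℤ) + ((k:ℤ)+2) + ((k:ℤ)+2) + ∑ i ∈ Sᶜ, ∑ j ∈ Sᶜ, f i j = 2 * n := by
    have e1 : ∑ i ∈ S, ∑ j, f i j + ∑ i ∈ Sᶜ, ∑ j, f i j = 2 * (n:ℤ) := by
      rw [Finset.sum_add_sum_compl S (fun i => ∑ j, f i j)]; exact htot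
    have e2 : ∑ i ∈ Sᶜ, ∑ j, f i j
        = ∑ i ∈ Sᶜ, ∑ j ∈ S, f i j + ∑ i ∈ Sᶜ, ∑ j ∈ Sᶜ, f i j := by
      rw [← Finset.sum_add_distrib]
      exact Finset.sum_congr rfl (fun i _ => (hsplit1 i).symm)
    rw [e2, hQ] at e1
    rw [hrow] at e1
    linarith
  have final : (3 * ((k:ℤ)+1) + 1) ≤ 2 * n := by linarith
  have : (3 * (k+1) + 1 : ℤ) ≤ 2 * n := by push_cast; linarith
  exact_mod_cast this
end

section
/- No quiver with 6g - 3 vertices in which every vertex has in-degree 2 and out-degree 2 contains the linear quiver A_{4g-2} as a full subquiver: if B is a skew-symmetric integer matrix on 6g - 3 vertices (g ≥ 1) with every vertex of in-degree 2 and out-degree 2, then there are no 4g - 2 distinct vertices v₁, …, v_{4g-2} with B_{v_s v_{s+1}} = 1 for all s and B_{v_s v_t} = 0 for all other pairs s < t. -/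
open Finset Matrix

theorem no_A_subquiver (g : ℕ) (hg : 1 ≤ g)
    (B : Matrix (Fin (6 * g - 3)) (Fin (6 * g - 3)) ℤ) (hB : Bᵀ = -B)
    (hin : ∀ k, ∑ i, max (B i k) 0 = 2)
    (hout : ∀ k, ∑ j, max (B k j) 0 = 2) :
    ¬ ∃ v : Fin (4 * g - 2) → Fin (6 * g - 3), Function.Injective v ∧
      ∀ s t : Fin (4 * g - 2), s < t →
        (((t : ℕ) = s + 1 ∧ B (v s) (v t) = 1) ∨ ((t : ℕ) ≠ s + 1 ∧ B (v s) (v t) = 0)) := by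
  rintro ⟨v, hv, hpath⟩
  have hsk : ∀ i j, B j i = - B i j := by
    intro i j
    have := congrFun (congrFun hB i) j
    simpa [Matrix.transpose_apply] using this
  have hm2 : 2 ≤ 4 * g - 2 := by omega
  set S : Finset (Fin (6 * g - 3)) := Finset.univ.image v with hS
  have hScard : S.card = 4 * g - 2 := by
    rw [hS, Finset.card_image_of_injective _ hv, Finset.card_univ, Fintype.card_fin]
  -- value of entries between path vertices
  have hval : ∀ s t : Fin (4 * g - 2),
      max (B (v s) (v t)) 0 = if (t : ℕ) = (s : ℕ) + 1 then 1 else 0 := by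
    intro s t
    rcases lt_trichotomy s t with hlt | heq | hgt
    · rcases hpath s t hlt with ⟨he, hb⟩ | ⟨hne, hb⟩
      · simp [hb, he]
      · simp [hb, hne]
    · subst heq
      have h0 : B (v s) (v s) = 0 := by have := hsk (v s) (v s); omega
      have : ¬ ((s : ℕ) = (s : ℕ) + 1) := by omega
      simp [h0, this]
    · have hc : ¬ ((t : ℕ) = (s : ℕ) + 1) := by
        have := Fin.lt_iff_val_lt_val.mp hgt; omega
      rcases hpath t s hgt with ⟨he, hb⟩ | ⟨hne, hb⟩ <;>
      · have : B (v s) (v t) = - B (v t) (v s) := hsk (v t) (v s)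
        rw [this, hb]
        simp [hc]
  -- P : inner sum over the path
  have hsumim : ∀ f : Fin (6 * g - 3) → ℤ, ∑ k ∈ S, f k = ∑ s : Fin (4 * g - 2), f (v s) := by
    intro f
    rw [hS, Finset.sum_image (fun a _ b _ h => hv h)]
  have hPval : ∑ k ∈ S, ∑ j ∈ S, max (B k j) 0 = (4 * g - 2 : ℕ) - 1 := by
    rw [hsumim]
    have : ∀ s : Fin (4 * g - 2), ∑ j ∈ S, max (B (v s) j) 0
        = if (s : ℕ) + 1 < 4 * g - 2 then (1 : ℤ) else 0 := by
      intro s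
      rw [hsumim]
      by_cases h1 : (s : ℕ) + 1 < 4 * g - 2
      · rw [if_pos h1]
        rw [Finset.sum_eq_single (⟨(s : ℕ) + 1, h1⟩ : Fin (4 * g - 2))]
        · rw [hval]; simp
        · intro t _ ht
          rw [hval, if_neg]
          intro hc
          exact ht (Fin.ext hc)
        · simp
      · rw [if_neg h1]
        apply Finset.sum_eq_zero
        intro t _
        rw [hval, if_neg]
        have := t.isLt
        omega
    rw [Finset.sum_congr rfl (fun s _ => this s)]
    have hlast : ∀ s : Fin (4 * g - 2),
        (if (s : ℕ) + 1 < 4 * g - 2 then (1 : ℤ) else 0)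
          = 1 - (if s = (⟨4 * g - 2 - 1, by omega⟩ : Fin (4 * g - 2)) then 1 else 0) := by
      intro s
      have hs := s.isLt
      by_cases h : s = (⟨4 * g - 2 - 1, by omega⟩ : Fin (4 * g - 2))
      · have : (s : ℕ) = 4 * g - 2 - 1 := by rw [h]
        rw [if_pos h, if_neg (by omega)]; ring
      · have : (s : ℕ) ≠ 4 * g - 2 - 1 := fun hc => h (Fin.ext hc)
        rw [if_neg h, if_pos (by omega)]; ring
    rw [Finset.sum_congr rfl (fun s _ => hlast s), Finset.sum_sub_distrib,
      Finset.sum_const, Finset.sum_ite_eq' _ _ (fun _ => (1 : ℤ))]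
    simp [Finset.card_univ]
  -- nonnegativity
  have hnn : ∀ (i j : Fin (6 * g - 3)), (0 : ℤ) ≤ max (B i j) 0 := fun i j => le_max_right _ _
  -- out-degrees over S
  have hA : ∑ k ∈ S, ∑ j ∈ S, max (B k j) 0 + ∑ k ∈ S, ∑ j ∈ Sᶜ, max (B k j) 0
      = 2 * ((4 * g - 2 : ℕ) : ℤ) := by
    have : ∀ k ∈ S, (∑ j ∈ S, max (B k j) 0) + ∑ j ∈ Sᶜ, max (B k j) 0 = 2 := by
      intro k _
      rw [Finset.sum_add_sum_compl]
      exact hout k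
    calc ∑ k ∈ S, ∑ j ∈ S, max (B k j) 0 + ∑ k ∈ S, ∑ j ∈ Sᶜ, max (B k j) 0
        = ∑ k ∈ S, ((∑ j ∈ S, max (B k j) 0) + ∑ j ∈ Sᶜ, max (B k j) 0) := by
          rw [Finset.sum_add_distrib]
      _ = ∑ k ∈ S, (2 : ℤ) := Finset.sum_congr rfl this
      _ = 2 * ((4 * g - 2 : ℕ) : ℤ) := by rw [Finset.sum_const, hScard]; ring
  -- in-degrees over S
  have hBsum : ∑ k ∈ S, ∑ j ∈ S, max (B k j) 0 + ∑ k ∈ S, ∑ i ∈ Sᶜ, max (B i k) 0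
      = 2 * ((4 * g - 2 : ℕ) : ℤ) := by
    have hcomm : ∑ k ∈ S, ∑ i ∈ S, max (B i k) 0 = ∑ k ∈ S, ∑ j ∈ S, max (B k j) 0 :=
      Finset.sum_comm
    have : ∀ k ∈ S, (∑ i ∈ S, max (B i k) 0) + ∑ i ∈ Sᶜ, max (B i k) 0 = 2 := by
      intro k _
      rw [Finset.sum_add_sum_compl]
      exact hin k
    calc ∑ k ∈ S, ∑ j ∈ S, max (B k j) 0 + ∑ k ∈ S, ∑ i ∈ Sᶜ, max (B i k) 0
        = ∑ k ∈ S, ((∑ i ∈ S, max (B i k) 0) + ∑ i ∈ Sᶜ, max (B i k) 0) := by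
          rw [← hcomm, Finset.sum_add_distrib]
      _ = ∑ k ∈ S, (2 : ℤ) := Finset.sum_congr rfl this
      _ = 2 * ((4 * g - 2 : ℕ) : ℤ) := by rw [Finset.sum_const, hScard]; ring
  -- total
  have hT : ∑ k, ∑ j, max (B k j) 0 = 2 * ((6 * g - 3 : ℕ) : ℤ) := by
    calc ∑ k, ∑ j, max (B k j) 0 = ∑ k : Fin (6 * g - 3), (2 : ℤ) :=
          Finset.sum_congr rfl (fun k _ => hout k)
      _ = 2 * ((6 * g - 3 : ℕ) : ℤ) := by
          rw [Finset.sum_const, Finset.card_univ, Fintype.card_fin]; ring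
  -- lower bound for total
  have hTsplit : ∑ k, ∑ j, max (B k j) 0
      = ∑ k ∈ S, (∑ j, max (B k j) 0) + ∑ k ∈ Sᶜ, (∑ j, max (B k j) 0) :=
    (Finset.sum_add_sum_compl S _).symm
  have hout2 : ∑ k ∈ S, (∑ j, max (B k j) 0) = 2 * ((4 * g - 2 : ℕ) : ℤ) := by
    calc ∑ k ∈ S, (∑ j, max (B k j) 0) = ∑ k ∈ S, (2 : ℤ) :=
          Finset.sum_congr rfl (fun k _ => hout k)
      _ = 2 * ((4 * g - 2 : ℕ) : ℤ) := by rw [Finset.sum_const, hScard]; ring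
  have hrest : ∑ k ∈ Sᶜ, (∑ j, max (B k j) 0) ≥ ∑ k ∈ S, ∑ i ∈ Sᶜ, max (B i k) 0 := by
    have h1 : ∀ k ∈ Sᶜ, (∑ j, max (B k j) 0) ≥ ∑ j ∈ S, max (B k j) 0 := by
      intro k _
      rw [← Finset.sum_add_sum_compl S (fun j => max (B k j) 0)]
      have : (0 : ℤ) ≤ ∑ j ∈ Sᶜ, max (B k j) 0 :=
        Finset.sum_nonneg (fun j _ => hnn k j)
      linarith
    calc ∑ k ∈ Sᶜ, (∑ j, max (B k j) 0)
        ≥ ∑ k ∈ Sᶜ, ∑ j ∈ S, max (B k j) 0 := Finset.sum_le_sum h1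
      _ = ∑ j ∈ S, ∑ k ∈ Sᶜ, max (B k j) 0 := Finset.sum_comm
  -- combine
  have hfinal : 2 * ((6 * g - 3 : ℕ) : ℤ) ≥ 3 * ((4 * g - 2 : ℕ) : ℤ) + 1 := by
    have hCI : ∑ k ∈ S, ∑ i ∈ Sᶜ, max (B i k) 0
        = 2 * ((4 * g - 2 : ℕ) : ℤ) - (((4 * g - 2 : ℕ) : ℤ) - 1) := by
      rw [← hBsum, hPval]; ring
    rw [← hT, hTsplit, hout2]
    rw [hCI] at hrest
    have hc : ((2 : ℕ) : ℤ) ≤ ((4 * g - 2 : ℕ) : ℤ) := by exact_mod_cast hm2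
    linarith
  have h1 : ((6 * g - 3 : ℕ) : ℤ) = 6 * (g : ℤ) - 3 := by omega
  have h2 : ((4 * g - 2 : ℕ) : ℤ) = 4 * (g : ℤ) - 2 := by omega
  rw [h1, h2] at hfinal
  omega
end
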